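/- The solution of the shifted Lorenz system X' = 10(Y−X), Y' = 28(X−100) − (X−100)(Z−10) − (Y−100), Z' = (X−100)(Y−100) − (8/3)(Z−10) started from any point of the shifted trapping region E' = {(X,Y,Z) : 28(X−100)² + 10(Y−100)² + 10(Z−66)² ≤ 40000} has all three coordinates strictly positive for all t ≥ 0. -/

import Mathlib

/-! Undoing the shift by `(100, 100, 10)` turns the system into the classical Lorenz system
`x' = 10(y − x)`, `y' = x(28 − z) − y`, `z' = xy − (8/3)z`. Along its solutions the function
`V = 28x² + 10y² + 10(z − 56)²` satisfies `V' + 2(V − 200²) < 0`, so `V' < 0` on the ellipsoid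
`V = 200²` and the solution can never leave `E = {V ≤ 200²}`. On `E` one has `|x| ≤ 200/√28 < 100`,
`|y| ≤ 200/√10 < 100` and `z ≥ 56 − 200/√10 > −10`, which is the positivity of the shifted
coordinates. -/

theorem le_of_hasDerivAt_neg_of_eq {f f' : ℝ → ℝ} {R a : ℝ}
    (hf : ∀ t, HasDerivAt f (f' t) t) (ha : f a ≤ R) (hR : ∀ t, f t = R → f' t < 0) :
    ∀ t ≥ a, f t ≤ R := fun _ ht =>
  image_le_of_deriv_right_lt_deriv_boundary'
    (fun s _ => (hf s).continuousAt.continuousWithinAt)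
    (fun s _ => (hf s).hasDerivWithinAt) ha continuousOn_const
    (fun _ _ => hasDerivWithinAt_const _ _ _) (fun s _ => hR s) ⟨ht, le_rfl⟩

def lorenzLyapunov (x y z : ℝ) : ℝ := 28 * x ^ 2 + 10 * y ^ 2 + 10 * (z - 56) ^ 2

section Lorenz

variable {x y z : ℝ → ℝ}
  (hx : ∀ t, HasDerivAt x (10 * (y t - x t)) t)
  (hy : ∀ t, HasDerivAt y (x t * (28 - z t) - y t) t)
  (hz : ∀ t, HasDerivAt z (x t * y t - 8 / 3 * z t) t)
include hx hy hz

theorem hasDerivAt_lorenzLyapunov (t : ℝ) :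
    HasDerivAt (fun s => lorenzLyapunov (x s) (y s) (z s))
      (-20 * (28 * x t ^ 2 + y t ^ 2 + 8 / 3 * z t ^ 2 - 448 / 3 * z t)) t := by
  have h := ((((hx t).pow 2).const_mul 28).add (((hy t).pow 2).const_mul 10)).add
    ((((hz t).sub_const 56).pow 2).const_mul 10)
  exact h.congr_deriv (by ring)

theorem lorenzLyapunov_le_of_le (h0 : lorenzLyapunov (x 0) (y 0) (z 0) ≤ 200 ^ 2) :
    ∀ t ≥ 0, lorenzLyapunov (x t) (y t) (z t) ≤ 200 ^ 2 := by
  refine le_of_hasDerivAt_neg_of_eq (hasDerivAt_lorenzLyapunov hx hy hz) h0 fun t ht => ?_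
  unfold lorenzLyapunov at ht
  nlinarith [sq_nonneg (x t), sq_nonneg (5 * z t - 56)]

end Lorenz

theorem lt_of_lorenzLyapunov_le {x y z : ℝ} (h : lorenzLyapunov x y z ≤ 200 ^ 2) :
    -100 < x ∧ -100 < y ∧ -10 < z := by
  unfold lorenzLyapunov at h
  refine ⟨?_, ?_, ?_⟩ <;>
    nlinarith [sq_nonneg x, sq_nonneg y, sq_nonneg (z - 56), sq_nonneg (x + 100),
      sq_nonneg (y + 100), sq_nonneg (z + 10)]

/-- Solutions of the shifted Lorenz system started in the shifted trapping ellipsoid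
`E' = {28(X−100)² + 10(Y−100)² + 10(Z−66)² ≤ 40000}` have all three coordinates strictly
positive for all `t ≥ 0`. -/
theorem shifted_lorenz_stays_positive
    (X Y Z : ℝ → ℝ)
    (hX : ∀ t, HasDerivAt X (10 * (Y t - X t)) t)
    (hY : ∀ t, HasDerivAt Y (28 * (X t - 100) - (X t - 100) * (Z t - 10) - (Y t - 100)) t)
    (hZ : ∀ t, HasDerivAt Z ((X t - 100) * (Y t - 100) - (8/3) * (Z t - 10)) t)
    (h0 : 28 * (X 0 - 100)^2 + 10 * (Y 0 - 100)^2 + 10 * (Z 0 - 66)^2 ≤ 40000) :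
    ∀ t ≥ (0:ℝ), 0 < X t ∧ 0 < Y t ∧ 0 < Z t := by
  have hx t : HasDerivAt (fun s => X s - 100) (10 * ((Y t - 100) - (X t - 100))) t :=
    ((hX t).sub_const 100).congr_deriv (by ring)
  have hy t : HasDerivAt (fun s => Y s - 100)
      ((X t - 100) * (28 - (Z t - 10)) - (Y t - 100)) t :=
    ((hY t).sub_const 100).congr_deriv (by ring)
  have hz t : HasDerivAt (fun s => Z s - 10)
      ((X t - 100) * (Y t - 100) - 8 / 3 * (Z t - 10)) t :=
    (hZ t).sub_const 10
  have hE := lorenzLyapunov_le_of_le hx hy hz (by unfold lorenzLyapunov; linarith)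
  intro t ht
  obtain ⟨hxt, hyt, hzt⟩ := lt_of_lorenzLyapunov_le (hE t ht)
  exact ⟨by linarith, by linarith, by linarith⟩
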